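/- arXiv:2511.06100 — 2 statements merged into one kernel-verified Lean document; each statement's English description precedes it below -/
import Mathlib

section
/- Define F : ℝ² ⇉ ℝ² by F(x,y) = {(y,1)} if x < (1/4)y²·sgn(y), F(x,y) = {(y,-1)} if x > (1/4)y²·sgn(y), F(x,y) = {(y,-1),(y,1)} on the switching curve x = (1/4)y²·sgn(y) with (x,y) ≠ (0,0), and F(0,0) = {(0,1),(0,-1)}. Then F is upper semi-continuous; that is, for every (x,y) and every open set V ⊇ F(x,y) there is a neighborhood U of (x,y) with F(U) ⊆ V. -/
/-- The Fuller feedback multi-valued map. -/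
noncomputable def fullerF (p : ℝ × ℝ) : Set (ℝ × ℝ) :=
  if p = (0, 0) then {(0, 1), (0, -1)}
  else if p.1 < (1 / 4) * p.2 ^ 2 * Real.sign p.2 then {(p.2, 1)}
  else if (1 / 4) * p.2 ^ 2 * Real.sign p.2 < p.1 then {(p.2, -1)}
  else {(p.2, -1), (p.2, 1)}

lemma sig_eq (y : ℝ) : (1 / 4 : ℝ) * y ^ 2 * Real.sign y = (1 / 4) * (y * |y|) := by
  rcases lt_trichotomy y 0 with h | h | h
  · rw [Real.sign_of_neg h, abs_of_neg h]; ring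
  · simp [h]
  · rw [Real.sign_of_pos h, abs_of_pos h]; ring

lemma cont_g : Continuous (fun q : ℝ × ℝ => q.1 - (1 / 4) * (q.2 * |q.2|)) := by
  fun_prop

lemma fullerF_subset (q : ℝ × ℝ) : fullerF q ⊆ {(q.2, 1), (q.2, -1)} := by
  unfold fullerF
  split_ifs with h1 h2 h3
  · subst h1; simp
  · intro x hx; left; exact hx
  · intro x hx; right; exact hx
  · rw [Set.pair_comm]

/-- The Fuller feedback map is upper semi-continuous. -/
theorem fullerF_usc :
    ∀ p : ℝ × ℝ, ∀ V : Set (ℝ × ℝ), IsOpen V → fullerF p ⊆ V →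
      ∃ δ > 0, ∀ q : ℝ × ℝ, dist q p < δ → fullerF q ⊆ V := by
  intro p V hV hFV
  rcases lt_trichotomy p.1 ((1 / 4) * p.2 ^ 2 * Real.sign p.2) with hlt | heq | hgt
  · -- below the switching curve
    have hne : p ≠ (0, 0) := by
      intro h; rw [h] at hlt; simp at hlt
    have hp1 : (p.2, 1) ∈ V := by
      apply hFV; unfold fullerF; rw [if_neg hne, if_pos hlt]; rfl
    obtain ⟨δ1, hδ1, hb1⟩ := Metric.isOpen_iff.mp hV _ hp1
    have hS : IsOpen {q : ℝ × ℝ | q.1 - (1 / 4) * (q.2 * |q.2|) < 0} :=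
      isOpen_lt cont_g continuous_const
    have hpS : p ∈ {q : ℝ × ℝ | q.1 - (1 / 4) * (q.2 * |q.2|) < 0} := by
      simp only [Set.mem_setOf_eq, ← sig_eq]; linarith
    obtain ⟨δ2, hδ2, hb2⟩ := Metric.isOpen_iff.mp hS _ hpS
    refine ⟨min δ1 δ2, lt_min hδ1 hδ2, fun q hq => ?_⟩
    have hqS := hb2 (Metric.mem_ball.mpr (lt_of_lt_of_le hq (min_le_right _ _)))
    have hqlt : q.1 < (1 / 4) * q.2 ^ 2 * Real.sign q.2 := by
      rw [sig_eq]; simpa [sub_neg] using hqS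
    have hqne : q ≠ (0, 0) := by
      intro h; rw [h] at hqlt; simp at hqlt
    have : fullerF q = {(q.2, 1)} := by
      unfold fullerF; rw [if_neg hqne, if_pos hqlt]
    rw [this]
    intro x hx; rw [Set.mem_singleton_iff] at hx; subst hx
    apply hb1
    rw [Metric.mem_ball]
    calc dist ((q.2 : ℝ), (1 : ℝ)) (p.2, 1) = dist q.2 p.2 := by
          simp [Prod.dist_eq, dist_nonneg]
      _ ≤ dist q p := by rw [Prod.dist_eq]; exact le_max_right _ _
      _ < δ1 := lt_of_lt_of_le hq (min_le_left _ _)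
  · -- on the switching curve: both points are in V
    have hboth : (p.2, 1) ∈ V ∧ (p.2, -1) ∈ V := by
      by_cases h0 : p = (0, 0)
      · have h2 : p.2 = 0 := by rw [h0]
        constructor
        · apply hFV; unfold fullerF; rw [if_pos h0]; rw [h2]; left; rfl
        · apply hFV; unfold fullerF; rw [if_pos h0]; rw [h2]; right; rfl
      · have hF : fullerF p = {(p.2, -1), (p.2, 1)} := by
          unfold fullerF
          rw [if_neg h0, if_neg (by linarith), if_neg (by linarith)]
        constructor
        · apply hFV; rw [hF]; right; rfl
        · apply hFV; rw [hF]; left; rfl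
    obtain ⟨δ1, hδ1, hb1⟩ := Metric.isOpen_iff.mp hV _ hboth.1
    obtain ⟨δ2, hδ2, hb2⟩ := Metric.isOpen_iff.mp hV _ hboth.2
    refine ⟨min δ1 δ2, lt_min hδ1 hδ2, fun q hq => ?_⟩
    intro x hx
    have hd : dist q.2 p.2 ≤ dist q p := by rw [Prod.dist_eq]; exact le_max_right _ _
    rcases fullerF_subset q hx with h | h
    · subst h
      apply hb1; rw [Metric.mem_ball]
      calc dist ((q.2 : ℝ), (1 : ℝ)) (p.2, 1) = dist q.2 p.2 := by
            simp [Prod.dist_eq, dist_nonneg]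
        _ < δ1 := lt_of_le_of_lt hd (lt_of_lt_of_le hq (min_le_left _ _))
    · rw [Set.mem_singleton_iff] at h; subst h
      apply hb2; rw [Metric.mem_ball]
      calc dist ((q.2 : ℝ), (-1 : ℝ)) (p.2, -1) = dist q.2 p.2 := by
            simp [Prod.dist_eq, dist_nonneg]
        _ < δ2 := lt_of_le_of_lt hd (lt_of_lt_of_le hq (min_le_right _ _))
  · -- above the switching curve
    have hne : p ≠ (0, 0) := by
      intro h; rw [h] at hgt; simp at hgt
    have hp1 : (p.2, -1) ∈ V := by
      apply hFV; unfold fullerF; rw [if_neg hne, if_neg (by linarith), if_pos hgt]; rfl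
    obtain ⟨δ1, hδ1, hb1⟩ := Metric.isOpen_iff.mp hV _ hp1
    have hS : IsOpen {q : ℝ × ℝ | 0 < q.1 - (1 / 4) * (q.2 * |q.2|)} :=
      isOpen_lt continuous_const cont_g
    have hpS : p ∈ {q : ℝ × ℝ | 0 < q.1 - (1 / 4) * (q.2 * |q.2|)} := by
      simp only [Set.mem_setOf_eq, ← sig_eq]; linarith
    obtain ⟨δ2, hδ2, hb2⟩ := Metric.isOpen_iff.mp hS _ hpS
    refine ⟨min δ1 δ2, lt_min hδ1 hδ2, fun q hq => ?_⟩
    have hqS := hb2 (Metric.mem_ball.mpr (lt_of_lt_of_le hq (min_le_right _ _)))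
    have hqgt : (1 / 4) * q.2 ^ 2 * Real.sign q.2 < q.1 := by
      rw [sig_eq]; simp only [Set.mem_setOf_eq, sub_pos] at hqS; linarith
    have hqne : q ≠ (0, 0) := by
      intro h; rw [h] at hqgt; simp at hqgt
    have : fullerF q = {(q.2, -1)} := by
      unfold fullerF; rw [if_neg hqne, if_neg (by linarith), if_pos hqgt]
    rw [this]
    intro x hx; rw [Set.mem_singleton_iff] at hx; subst hx
    apply hb1
    rw [Metric.mem_ball]
    calc dist ((q.2 : ℝ), (-1 : ℝ)) (p.2, -1) = dist q.2 p.2 := by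
          simp [Prod.dist_eq, dist_nonneg]
      _ ≤ dist q p := by rw [Prod.dist_eq]; exact le_max_right _ _
      _ < δ1 := lt_of_lt_of_le hq (min_le_left _ _)
end

section
/- Let G : K ⇉ ℝⁿ be upper semi-continuous with nonempty convex compact values on a locally closed set K ⊆ ℝⁿ, let w be a C¹ function on an open set containing K, and define G̃(z) = { v ∈ G(z) : ⟨∇w(z), v⟩ ≥ 1 }. If G̃(z) is nonempty for all z ∈ K, then G̃ is upper semi-continuous with nonempty convex compact values. -/
private lemma mem_cth_iff {n : ℕ} {s : Set (EuclideanSpace ℝ (Fin n))}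
    {x : EuclideanSpace ℝ (Fin n)} {δ : ℝ} (hδ : 0 ≤ δ) (hs : s.Nonempty) :
    x ∈ Metric.cthickening δ s ↔ Metric.infDist x s ≤ δ := by
  rw [Metric.mem_cthickening_iff, Metric.infDist,
    ← ENNReal.le_ofReal_iff_toReal_le (Metric.infEdist_ne_top hs) hδ]

/-- Restricting an usc map with nonempty convex compact values to the half-space
`⟨∇w(z), v⟩ ≥ 1` preserves upper semi-continuity and nonempty convex compact values. -/
theorem restricted_map_usc {n : ℕ}
    (K U : Set (EuclideanSpace ℝ (Fin n))) (hK : IsLocallyClosed K)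
    (hU : IsOpen U) (hKU : K ⊆ U)
    (w : EuclideanSpace ℝ (Fin n) → ℝ) (hw : ContDiffOn ℝ 1 w U)
    (G Gt : EuclideanSpace ℝ (Fin n) → Set (EuclideanSpace ℝ (Fin n)))
    (hGne : ∀ z ∈ K, (G z).Nonempty)
    (hGconv : ∀ z ∈ K, Convex ℝ (G z))
    (hGcpt : ∀ z ∈ K, IsCompact (G z))
    (hGusc : ∀ z ∈ K, ∀ ε > (0:ℝ), ∃ δ > (0:ℝ), ∀ z' ∈ K, ‖z' - z‖ < δ →
      G z' ⊆ Metric.cthickening ε (G z))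
    (hGt : ∀ z, Gt z = {v ∈ G z | 1 ≤ fderiv ℝ w z v})
    (hne : ∀ z ∈ K, (Gt z).Nonempty) :
    ∀ z ∈ K, (Gt z).Nonempty ∧ Convex ℝ (Gt z) ∧ IsCompact (Gt z) ∧
      ∀ ε > (0:ℝ), ∃ δ > (0:ℝ), ∀ z' ∈ K, ‖z' - z‖ < δ →
        Gt z' ⊆ Metric.cthickening ε (Gt z) := by
  intro z hz
  set p := fderiv ℝ w z with hp
  have hGtz : Gt z = G z ∩ {v | 1 ≤ p v} := by
    rw [hGt]; rfl
  have hcpt : IsCompact (G z) := hGcpt z hz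
  have hGzclosed : IsClosed (G z) := hcpt.isClosed
  have hhalf : IsClosed {v : EuclideanSpace ℝ (Fin n) | 1 ≤ p v} :=
    isClosed_le continuous_const p.continuous
  have hGtconv : Convex ℝ (Gt z) := by
    rw [hGtz]
    exact (hGconv z hz).inter (convex_halfSpace_ge p.toLinearMap.isLinear 1)
  have hGtcpt : IsCompact (Gt z) := by
    rw [hGtz]
    exact hcpt.inter_right hhalf
  have hGtzcl : IsClosed (Gt z) := hGtcpt.isClosed
  refine ⟨hne z hz, hGtconv, hGtcpt, ?_⟩
  intro ε hε
  -- Key claim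
  have claim : ∃ η > (0:ℝ), ∀ v, v ∈ Metric.cthickening η (G z) → 1 - η ≤ p v →
      v ∈ Metric.cthickening ε (Gt z) := by
    by_contra hcon
    push_neg at hcon
    have hseq : ∀ k : ℕ, ∃ v, v ∈ Metric.cthickening (1 / (k + 1)) (G z) ∧
        1 - 1 / (k + 1) ≤ p v ∧ v ∉ Metric.cthickening ε (Gt z) := by
      intro k
      obtain ⟨v, hv1, hv2, hv3⟩ := hcon (1 / (k + 1)) (by positivity)
      exact ⟨v, hv1, hv2, hv3⟩
    choose u hu1 hu2 hu3 using hseq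
    have hbig : IsCompact (Metric.cthickening 1 (G z)) := hcpt.cthickening
    have hmem : ∀ k, u k ∈ Metric.cthickening 1 (G z) := by
      intro k
      exact Metric.cthickening_mono (by
        rw [div_le_one (by positivity)]; linarith [Nat.cast_nonneg (α := ℝ) k]) _ (hu1 k)
    obtain ⟨v, hvmem, φ, hφmono, hφlim⟩ := hbig.tendsto_subseq hmem
    have hGzne := hGne z hz
    -- v ∈ G z
    have hinf : ∀ k, Metric.infDist (u k) (G z) ≤ 1 / (k + 1) := by
      intro k
      exact (mem_cth_iff (by positivity) hGzne).mp (hu1 k)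
    have hto0 : Filter.Tendsto (fun k : ℕ => (1:ℝ) / (k + 1)) Filter.atTop (nhds 0) :=
      tendsto_one_div_add_atTop_nhds_zero_nat
    have hinfv : Metric.infDist v (G z) = 0 := by
      have hcont : Filter.Tendsto (fun k => Metric.infDist (u (φ k)) (G z))
          Filter.atTop (nhds (Metric.infDist v (G z))) :=
        ((Metric.continuous_infDist_pt (G z)).continuousAt.tendsto.comp hφlim)
      have hle : Metric.infDist v (G z) ≤ 0 := by
        refine le_of_tendsto_of_tendsto hcont (hto0.comp hφmono.tendsto_atTop) ?_
        exact Filter.Eventually.of_forall fun k => hinf (φ k)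
      exact le_antisymm hle (Metric.infDist_nonneg)
    have hvG : v ∈ G z := by
      have h := (Metric.mem_closure_iff_infDist_zero hGzne (x := v)).mpr hinfv
      rwa [hGzclosed.closure_eq] at h
    -- 1 ≤ p v
    have hpv : 1 ≤ p v := by
      have hcont : Filter.Tendsto (fun k => p (u (φ k))) Filter.atTop (nhds (p v)) :=
        (p.continuous.continuousAt.tendsto.comp hφlim)
      have hlow : Filter.Tendsto (fun k : ℕ => 1 - 1 / ((φ k : ℝ) + 1)) Filter.atTop
          (nhds (1 - 0)) :=
        tendsto_const_nhds.sub (hto0.comp hφmono.tendsto_atTop)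
      rw [sub_zero] at hlow
      exact le_of_tendsto_of_tendsto hlow hcont
        (Filter.Eventually.of_forall fun k => hu2 (φ k))
    have hvGt : v ∈ Gt z := by rw [hGtz]; exact ⟨hvG, hpv⟩
    -- but infDist v (Gt z) ≥ ε
    have hfar : ∀ k, ε ≤ Metric.infDist (u k) (Gt z) := by
      intro k
      by_contra h
      push_neg at h
      exact hu3 k ((mem_cth_iff hε.le (hne z hz)).mpr h.le)
    have hvfar : ε ≤ Metric.infDist v (Gt z) := by
      have hcont : Filter.Tendsto (fun k => Metric.infDist (u (φ k)) (Gt z))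
          Filter.atTop (nhds (Metric.infDist v (Gt z))) :=
        ((Metric.continuous_infDist_pt (Gt z)).continuousAt.tendsto.comp hφlim)
      exact ge_of_tendsto hcont (Filter.Eventually.of_forall fun k => hfar (φ k))
    rw [Metric.infDist_zero_of_mem hvGt] at hvfar
    linarith
  obtain ⟨η, hη, hclaim⟩ := claim
  -- bound R on the η-thickening of G z
  obtain ⟨R, hR⟩ := (hcpt.cthickening (r := η)).isBounded.subset_closedBall 0
  have hR0 : 0 ≤ R := by
    obtain ⟨v0, hv0⟩ := hGne z hz
    have : v0 ∈ Metric.closedBall 0 R := hR (Metric.self_subset_cthickening _ hv0)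
    simpa using (norm_nonneg v0).trans (by simpa using this)
  -- continuity of fderiv at z
  have hcf : ContinuousOn (fderiv ℝ w) U := hw.continuousOn_fderiv_of_isOpen hU le_rfl
  have hcz : ContinuousWithinAt (fderiv ℝ w) U z := hcf z (hKU hz)
  have hpos : (0:ℝ) < η / (R + 1) := by positivity
  obtain ⟨δ₂, hδ₂, hδ₂p⟩ := Metric.continuousWithinAt_iff.mp hcz (η / (R + 1)) hpos
  obtain ⟨δ₁, hδ₁, hδ₁p⟩ := hGusc z hz η hη
  refine ⟨min δ₁ δ₂, lt_min hδ₁ hδ₂, ?_⟩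
  intro z' hz' hzz' v hv
  rw [hGt] at hv
  obtain ⟨hvG', hvp'⟩ := hv
  have hvthick : v ∈ Metric.cthickening η (G z) :=
    hδ₁p z' hz' (lt_of_lt_of_le hzz' (min_le_left _ _)) hvG'
  have hvnorm : ‖v‖ ≤ R := by
    have := hR hvthick
    simpa using this
  have hfd : dist (fderiv ℝ w z') (fderiv ℝ w z) < η / (R + 1) := by
    apply hδ₂p (hKU hz')
    rw [dist_eq_norm]
    exact lt_of_lt_of_le hzz' (min_le_right _ _)
  have hdiff : |fderiv ℝ w z' v - p v| ≤ (η / (R + 1)) * R := by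
    have h1 : fderiv ℝ w z' v - p v = (fderiv ℝ w z' - p) v := by simp
    rw [h1, ← Real.norm_eq_abs]
    calc ‖(fderiv ℝ w z' - p) v‖ ≤ ‖fderiv ℝ w z' - p‖ * ‖v‖ :=
          (fderiv ℝ w z' - p).le_opNorm v
      _ ≤ (η / (R + 1)) * R := by
          apply mul_le_mul _ hvnorm (norm_nonneg _) hpos.le
          rw [← dist_eq_norm]
          exact hfd.le
  have hkey : 1 - η ≤ p v := by
    have h2 : (η / (R + 1)) * R ≤ η := by
      rw [div_mul_eq_mul_div, div_le_iff₀ (by linarith)]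
      nlinarith
    have := abs_le.mp hdiff
    linarith
  exact hclaim v hvthick hkey
end
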